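/- arXiv:0810.0086 — 2 statements merged into one kernel-verified Lean document; each statement's English description precedes it below -/
import Mathlib

section
/- Let μ > 0 and α₀ < √(μ/π). Then for every ξ ∈ ℝ the quantity D(ξ) = 1 − (α₀/(2μ)) ∫_{−∞}^ξ e^{−η²/(4μ)} dη is strictly positive, and the function w(ξ) = α₀ e^{−ξ²/(4μ)} / D(ξ) is smooth and satisfies the stationary rescaled Burgers equation μ w''(ξ) + (1/2) d/dξ (ξ w(ξ)) − w(ξ) w'(ξ) = 0 for all ξ ∈ ℝ. -/
open MeasureTheory

/-- The denominator of the self-similar diffusion wave. -/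
noncomputable def Dfun (μ α₀ : ℝ) (ξ : ℝ) : ℝ :=
  1 - α₀ / (2 * μ) * ∫ η in Set.Iio ξ, Real.exp (-η ^ 2 / (4 * μ))

/-- The self-similar diffusion wave `w(ξ) = α₀ e^{−ξ²/(4μ)} / D(ξ)`. -/
noncomputable def wfun (μ α₀ : ℝ) (ξ : ℝ) : ℝ :=
  α₀ * Real.exp (-ξ ^ 2 / (4 * μ)) / Dfun μ α₀ ξ

section aux

variable {μ : ℝ}

/-- The complex extension of the Gaussian integrand. -/
noncomputable def gC (μ : ℝ) (z : ℂ) : ℂ := Complex.exp (-z ^ 2 / (4 * (μ:ℂ)))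

/-- Parametrized primitive of the complex Gaussian: `Ifun z = ∫_0^1 g(s z) ds`,
so that `z * Ifun z = ∫_0^z g`. -/
noncomputable def Ifun (μ : ℝ) (z : ℂ) : ℂ := ∫ s in (0:ℝ)..1, gC μ ((s:ℂ) * z)

lemma gC_deriv (t : ℝ) (z : ℂ) :
    HasDerivAt (fun z => gC μ ((t:ℂ) * z))
      (-(2 * (t:ℂ)^2 * z) / (4 * (μ:ℂ)) * gC μ ((t:ℂ) * z)) z := by
  have h1 : HasDerivAt (fun z : ℂ => -((t:ℂ) * z) ^ 2 / (4 * (μ:ℂ)))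
      (-(2 * ((t:ℂ) * z) ^ 1 * (t:ℂ)) / (4 * (μ:ℂ))) z := by
    have h0 : HasDerivAt (fun z : ℂ => (t:ℂ) * z) ((t:ℂ)) z := by
      simpa using (hasDerivAt_id z).const_mul (t:ℂ)
    have := ((h0.pow 2).neg).div_const (4 * (μ:ℂ))
    simpa using this
  have h2 := h1.cexp
  have : -(2 * ((t:ℂ) * z) ^ 1 * (t:ℂ)) / (4 * (μ:ℂ)) = -(2 * (t:ℂ)^2 * z) / (4 * (μ:ℂ)) := by
    ring
  rw [this] at h2
  unfold gC
  refine h2.congr_deriv ?_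
  ring

lemma gC_cont' (z : ℂ) : Continuous (fun s : ℝ => gC μ ((s:ℂ) * z)) := by
  unfold gC; fun_prop

lemma norm_gC_le (hμ : 0 < μ) (w : ℂ) : ‖gC μ w‖ ≤ Real.exp (‖w‖ ^ 2 / (4*μ)) := by
  unfold gC
  rw [Complex.norm_exp, Real.exp_le_exp]
  have h1 : (-w ^ 2 / (4 * (μ:ℂ))).re ≤ ‖(-w ^ 2 / (4 * (μ:ℂ)))‖ :=
    Complex.re_le_norm _
  have h2 : ‖(-w ^ 2 / (4 * (μ:ℂ)))‖ = ‖w‖ ^ 2 / (4*μ) := by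
    rw [norm_div, norm_neg, norm_pow]
    congr 1
    have : (4 * (μ:ℂ)) = ((4*μ : ℝ) : ℂ) := by push_cast; ring
    rw [this, Complex.norm_real, Real.norm_eq_abs, abs_of_pos (by positivity)]
  linarith

lemma Ifun_differentiable (hμ : 0 < μ) : Differentiable ℂ (Ifun μ) := by
  intro z₀
  have hB0 : 0 < ‖z₀‖ + 1 := by positivity
  set B : ℝ := ‖z₀‖ + 1 with hB
  have key := intervalIntegral.hasDerivAt_integral_of_dominated_loc_of_deriv_le
    (𝕜 := ℂ) (μ := volume) (a := 0) (b := 1)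
    (F := fun z (s : ℝ) => gC μ ((s:ℂ) * z))
    (F' := fun z (s : ℝ) => -(2 * (s:ℂ)^2 * z) / (4 * (μ:ℂ)) * gC μ ((s:ℂ) * z))
    (x₀ := z₀) (s := Metric.ball z₀ 1)
    (bound := fun _ => 2 * B / (4*μ) * Real.exp (B^2 / (4*μ)))
    (Metric.ball_mem_nhds z₀ one_pos) ?_ ?_ ?_ ?_ ?_ ?_
  · exact key.2.differentiableAt
  · filter_upwards with z using ((gC_cont' z).aestronglyMeasurable).restrict
  · exact (gC_cont' z₀).intervalIntegrable 0 1
  · apply Continuous.aestronglyMeasurable ?_ |>.restrict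
    unfold gC; fun_prop
  · filter_upwards with t ht z hz
    rw [Set.uIoc_of_le zero_le_one] at ht
    have ht0 : 0 ≤ t := le_of_lt ht.1
    have ht1 : t ≤ 1 := ht.2
    have hz1 : ‖z‖ ≤ B := by
      have h1 := norm_sub_norm_le z z₀
      rw [← dist_eq_norm] at h1
      rw [Metric.mem_ball] at hz
      rw [hB]; linarith
    rw [norm_mul]
    have h4 : ‖(4 * (μ:ℂ))‖ = 4*μ := by
      have h5 : (4 * (μ:ℂ)) = ((4*μ : ℝ) : ℂ) := by push_cast; ring
      rw [h5, Complex.norm_real, Real.norm_eq_abs, abs_of_pos (by positivity)]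
    have ht2 : ‖(t:ℂ)^2‖ ≤ 1 := by
      rw [norm_pow, Complex.norm_real, Real.norm_eq_abs, abs_of_nonneg ht0]
      nlinarith
    have e1 : ‖-(2 * (t:ℂ)^2 * z) / (4 * (μ:ℂ))‖ ≤ 2 * B / (4*μ) := by
      rw [norm_div, norm_neg, norm_mul, norm_mul, h4,
        (by simp : ‖(2:ℂ)‖ = (2:ℝ)), div_le_div_iff₀ (by positivity) (by positivity)]
      have hn2 : (0:ℝ) ≤ ‖(t:ℂ)^2‖ := norm_nonneg _
      have hnz : (0:ℝ) ≤ ‖z‖ := norm_nonneg _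
      nlinarith [mul_le_mul ht2 hz1 hnz (by norm_num : (0:ℝ) ≤ 1)]
    have e2 : ‖gC μ ((t:ℂ) * z)‖ ≤ Real.exp (B^2/(4*μ)) := by
      refine (norm_gC_le hμ _).trans ?_
      rw [Real.exp_le_exp, div_le_div_iff₀ (by positivity) (by positivity)]
      have habs : ‖((t:ℂ) * z)‖ ≤ B := by
        rw [norm_mul, Complex.norm_real, Real.norm_eq_abs, abs_of_nonneg ht0]
        have hza : ‖z‖ ≤ B := by exact hz1
        nlinarith [norm_nonneg z]
      have hsq := pow_le_pow_left₀ (norm_nonneg ((t:ℂ)*z)) habs 2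
      nlinarith
    exact mul_le_mul e1 e2 (norm_nonneg _) (by positivity)
  · exact intervalIntegrable_const
  · filter_upwards with t ht z hz
    exact gC_deriv t z

lemma Hfun_analytic (hμ : 0 < μ) (x : ℝ) :
    AnalyticAt ℝ (fun x : ℝ => ∫ t in (0:ℝ)..x, Real.exp (-t^2/(4*μ))) x := by
  have hΦdiff : Differentiable ℂ (fun z => z * Ifun μ z) :=
    differentiable_id.mul (Ifun_differentiable hμ)
  have h1 : AnalyticAt ℂ (fun z => z * Ifun μ z) (x:ℂ) := hΦdiff.analyticAt _
  have h2 : AnalyticAt ℝ (fun z => z * Ifun μ z) (x:ℂ) := h1.restrictScalars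
  have h3 : AnalyticAt ℝ (fun x : ℝ => (x:ℂ) * Ifun μ (x:ℂ)) x := by
    have := h2.comp (Complex.ofRealCLM.analyticAt x)
    exact this
  have h4 : AnalyticAt ℝ (fun x : ℝ => ((x:ℂ) * Ifun μ (x:ℂ)).re) x := by
    set F : ℝ → ℂ := fun x : ℝ => (x:ℂ) * Ifun μ (x:ℂ) with hF
    exact (Complex.reCLM.analyticAt (F x)).comp h3
  have heq : (fun x : ℝ => ((x:ℂ) * Ifun μ (x:ℂ)).re)
      = fun x : ℝ => ∫ t in (0:ℝ)..x, Real.exp (-t^2/(4*μ)) := by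
    funext y
    have hI : Ifun μ (y:ℂ) = ((∫ s in (0:ℝ)..1, Real.exp (-(s*y)^2/(4*μ)) : ℝ) : ℂ) := by
      unfold Ifun
      have hptw : (fun s : ℝ => gC μ ((s:ℂ) * (y:ℂ)))
          = fun s : ℝ => ((Real.exp (-(s*y)^2/(4*μ)) : ℝ) : ℂ) := by
        funext s
        unfold gC
        rw [Complex.ofReal_exp]
        congr 1
        push_cast
        ring
      rw [hptw]
      exact RCLike.intervalIntegral_ofReal (𝕜 := ℂ)
    rw [hI, show ((y:ℂ) * ((∫ s in (0:ℝ)..1, Real.exp (-(s*y)^2/(4*μ)) : ℝ) : ℂ))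
        = (((y * ∫ s in (0:ℝ)..1, Real.exp (-(s*y)^2/(4*μ))) : ℝ) : ℂ) by push_cast; ring,
      Complex.ofReal_re]
    have hsub := intervalIntegral.smul_integral_comp_mul_right (a := (0:ℝ)) (b := 1)
      (fun t => Real.exp (-t^2/(4*μ))) y
    simp only [smul_eq_mul, zero_mul, one_mul] at hsub
    rw [← hsub]
  rw [← heq]
  exact h4

end aux

/-- for `μ > 0` and `α₀ < √(μ/π)`, the denominator `D` is strictly positive,
`w` is smooth, and `w` is a stationary solution of the rescaled Burgers equation:
`μ w'' + (1/2)(ξ w)' − w w' = 0` on `ℝ`. -/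
theorem stmt1 (μ α₀ : ℝ) (hμ : 0 < μ) (hα : α₀ < Real.sqrt (μ / Real.pi)) :
    (∀ ξ : ℝ, 0 < Dfun μ α₀ ξ) ∧
      ContDiff ℝ (⊤ : ℕ∞) (wfun μ α₀) ∧
      ∀ ξ : ℝ,
        μ * deriv (deriv (wfun μ α₀)) ξ
            + (1 / 2) * deriv (fun x => x * wfun μ α₀ x) ξ
            - wfun μ α₀ ξ * deriv (wfun μ α₀) ξ = 0 := by
  have hμ0 : μ ≠ 0 := ne_of_gt hμ
  set g : ℝ → ℝ := fun η => Real.exp (-η ^ 2 / (4 * μ)) with hg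
  have hb : (0:ℝ) < 1/(4*μ) := by positivity
  have hgeq : g = fun x => Real.exp (-(1/(4*μ)) * x ^ 2) := by
    funext x; rw [hg]; ring_nf
  have hgint : Integrable g := by
    rw [hgeq]; exact integrable_exp_neg_mul_sq hb
  have hgcont : Continuous g := by
    rw [hgeq]; fun_prop
  have hgpos : ∀ x, 0 < g x := fun x => Real.exp_pos _
  have hDfun : Dfun μ α₀ = fun ξ => 1 - α₀/(2*μ) * ∫ η in Set.Iio ξ, g η := by
    funext ξ; rw [hg]; rfl
  have hwfun : wfun μ α₀ = fun ξ => α₀ * g ξ / Dfun μ α₀ ξ := by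
    funext ξ; rw [hg]; rfl
  -- derivative of g
  have hg' : ∀ ξ, HasDerivAt g (-(ξ/(2*μ)) * g ξ) ξ := by
    intro ξ
    have h1 : HasDerivAt (fun x : ℝ => -x ^ 2 / (4 * μ)) (-(2*ξ)/(4*μ)) ξ := by
      have := ((hasDerivAt_pow 2 ξ).neg).div_const (4*μ)
      simpa using this
    have h2 := h1.exp
    rw [hg]
    convert h2 using 1
    show -(ξ/(2*μ)) * Real.exp (-ξ^2/(4*μ)) = Real.exp (-ξ^2/(4*μ)) * (-(2*ξ)/(4*μ))
    field_simp
    ring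
  -- total integral
  have htot : (∫ x : ℝ, g x) = Real.sqrt (4*μ*Real.pi) := by
    rw [hgeq, integral_gaussian]
    congr 1
    field_simp
  -- F < total
  have hFlt : ∀ ξ : ℝ, (∫ η in Set.Iio ξ, g η) < ∫ x, g x := by
    intro ξ
    have hsplit : (∫ η in Set.Iio ξ, g η) + (∫ η in Set.Ici ξ, g η) = ∫ x, g x :=
      intervalIntegral.integral_Iio_add_Ici hgint.integrableOn hgint.integrableOn
    have hpos : 0 < ∫ η in Set.Ici ξ, g η := by
      refine (setIntegral_pos_iff_support_of_nonneg_ae ?_ hgint.integrableOn).2 ?_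
      · filter_upwards with x using (hgpos x).le
      · have hsupp : Function.support g = Set.univ := by
          ext x; simp [Function.support, (hgpos x).ne']
        rw [hsupp, Set.univ_inter, Real.volume_Ici]
        simp
    linarith
  -- positivity of D
  have hD : ∀ ξ : ℝ, 0 < Dfun μ α₀ ξ := by
    intro ξ
    rw [hDfun]
    have hF0 : 0 ≤ ∫ η in Set.Iio ξ, g η :=
      setIntegral_nonneg measurableSet_Iio (fun x _ => (hgpos x).le)
    rcases le_or_gt α₀ 0 with h | h
    · have : α₀/(2*μ) * (∫ η in Set.Iio ξ, g η) ≤ 0 :=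
        mul_nonpos_of_nonpos_of_nonneg (div_nonpos_of_nonpos_of_nonneg h (by positivity)) hF0
      simp only []
      linarith
    · have hsq : (0:ℝ) < Real.sqrt (4*μ*Real.pi) :=
        Real.sqrt_pos.2 (by positivity)
      have h1 : α₀/(2*μ) * (∫ η in Set.Iio ξ, g η) < α₀/(2*μ) * Real.sqrt (4*μ*Real.pi) := by
        apply mul_lt_mul_of_pos_left _ (by positivity)
        rw [← htot]; exact hFlt ξ
      have hs : Real.sqrt (μ/Real.pi) * Real.sqrt (4*μ*Real.pi) = 2*μ := by
        rw [← Real.sqrt_mul (by positivity)]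
        rw [show μ/Real.pi * (4*μ*Real.pi) = (2*μ)^2 by
          field_simp
          ring]
        exact Real.sqrt_sq (by positivity)
      have h2 : α₀ * Real.sqrt (4*μ*Real.pi) < 2*μ := by
        calc α₀ * Real.sqrt (4*μ*Real.pi) < Real.sqrt (μ/Real.pi) * Real.sqrt (4*μ*Real.pi) :=
              mul_lt_mul_of_pos_right hα hsq
        _ = 2*μ := hs
      have h3 : α₀/(2*μ) * Real.sqrt (4*μ*Real.pi) < 1 := by
        rw [show α₀/(2*μ) * Real.sqrt (4*μ*Real.pi) = α₀ * Real.sqrt (4*μ*Real.pi) / (2*μ) by ring,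
          div_lt_one (by positivity)]
        linarith
      simp only []
      linarith
  -- splitting of the Iio integral
  have hIio : ∀ x : ℝ, (∫ η in Set.Iio x, g η)
      = (∫ η in Set.Iio (0:ℝ), g η) + ∫ t in (0:ℝ)..x, g t := by
    intro x
    rw [← intervalIntegral.integral_Iic_sub_Iic hgint.integrableOn hgint.integrableOn,
      integral_Iic_eq_integral_Iio, integral_Iic_eq_integral_Iio]
    ring
  -- derivative of D
  have hD' : ∀ ξ, HasDerivAt (Dfun μ α₀) (-(α₀/(2*μ) * g ξ)) ξ := by
    intro ξ
    have hF : HasDerivAt (fun x => ∫ η in Set.Iio x, g η) (g ξ) ξ := by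
      rw [funext hIio]
      exact (intervalIntegral.integral_hasDerivAt_right hgint.intervalIntegrable
        hgcont.aestronglyMeasurable.stronglyMeasurableAtFilter hgcont.continuousAt).const_add _
    have := (hF.const_mul (α₀/(2*μ))).const_sub 1
    rw [hDfun]
    exact this
  -- analyticity
  have hgana : ∀ x : ℝ, AnalyticAt ℝ g x := by
    intro x
    have hform : g = fun η : ℝ => Real.exp ((-1/(4*μ)) * η ^ 2) := by
      rw [hgeq]; funext η; congr 1; ring
    rw [hform]
    exact (analyticAt_const.mul (analyticAt_id.pow 2)).rexp
  have hDana : ∀ x : ℝ, AnalyticAt ℝ (Dfun μ α₀) x := by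
    intro x
    have hDeq : Dfun μ α₀ = fun ξ => 1 - α₀/(2*μ) *
        ((∫ η in Set.Iio (0:ℝ), g η) + ∫ t in (0:ℝ)..ξ, g t) := by
      rw [hDfun]; funext ξ; rw [hIio ξ]
    rw [hDeq]
    apply analyticAt_const.sub
    apply analyticAt_const.mul
    apply analyticAt_const.add
    rw [hg]
    exact Hfun_analytic hμ x
  have hwana : ∀ x : ℝ, AnalyticAt ℝ (wfun μ α₀) x := by
    intro x
    rw [hwfun]
    exact (analyticAt_const.mul (hgana x)).div (hDana x) (hD x).ne'
  have hwsmooth : ContDiff ℝ (⊤ : ℕ∞) (wfun μ α₀) :=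
    AnalyticOnNhd.contDiff (fun x _ => hwana x)
  -- derivative of w
  have hw' : ∀ ξ, HasDerivAt (wfun μ α₀)
      ((α₀ * (-(ξ/(2*μ)) * g ξ) * Dfun μ α₀ ξ - α₀ * g ξ * -(α₀/(2*μ) * g ξ)) / Dfun μ α₀ ξ ^ 2)
      ξ := by
    intro ξ
    have h := ((hg' ξ).const_mul α₀).div (hD' ξ) (hD ξ).ne'
    rw [hwfun]
    exact h
  have hderivw : deriv (wfun μ α₀) = fun ξ =>
      (α₀ * (-(ξ/(2*μ)) * g ξ) * Dfun μ α₀ ξ - α₀ * g ξ * -(α₀/(2*μ) * g ξ)) / Dfun μ α₀ ξ ^ 2 :=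
    funext fun ξ => (hw' ξ).deriv
  -- first integral identity : μ w' + (1/2) ξ w - w²/2 = 0
  have hE0 : ∀ ξ : ℝ, μ * deriv (wfun μ α₀) ξ + (1/2) * (ξ * wfun μ α₀ ξ)
      - wfun μ α₀ ξ ^ 2 / 2 = 0 := by
    intro ξ
    rw [hderivw, hwfun]
    have hDne : Dfun μ α₀ ξ ≠ 0 := (hD ξ).ne'
    field_simp
    ring
  refine ⟨hD, hwsmooth, ?_⟩
  intro ξ
  have hwinf : ContDiff ℝ (⊤ : ℕ∞) (wfun μ α₀) := hwsmooth.of_le (by simp)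
  have hdwsm : ContDiff ℝ (⊤ : ℕ∞) (deriv (wfun μ α₀)) := (contDiff_infty_iff_deriv.1 hwinf).2
  have hdw : DifferentiableAt ℝ (deriv (wfun μ α₀)) ξ :=
    (hdwsm.differentiable (by simp)) ξ
  have hxw : HasDerivAt (fun x => x * wfun μ α₀ x)
      (deriv (fun x => x * wfun μ α₀ x) ξ) ξ :=
    (differentiableAt_id.mul (hw' ξ).differentiableAt).hasDerivAt
  have hsq : HasDerivAt (fun x => wfun μ α₀ x ^ 2 / 2)
      (wfun μ α₀ ξ * deriv (wfun μ α₀) ξ) ξ := by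
    have hmul : (fun x => wfun μ α₀ x ^ 2 / 2) = fun x => wfun μ α₀ x * wfun μ α₀ x / 2 := by
      funext x; ring
    have h := ((hw' ξ).mul (hw' ξ)).div_const 2
    rw [hmul]
    refine h.congr_deriv ?_
    rw [hderivw]
    ring
  have key : HasDerivAt
      (fun x => μ * deriv (wfun μ α₀) x + (1/2) * (x * wfun μ α₀ x) - wfun μ α₀ x ^ 2 / 2)
      (μ * deriv (deriv (wfun μ α₀)) ξ + (1/2) * deriv (fun x => x * wfun μ α₀ x) ξ
        - wfun μ α₀ ξ * deriv (wfun μ α₀) ξ) ξ :=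
    ((hdw.hasDerivAt.const_mul μ).add (hxw.const_mul (1/2))).sub hsq
  have hzero : (fun x => μ * deriv (wfun μ α₀) x + (1/2) * (x * wfun μ α₀ x)
      - wfun μ α₀ x ^ 2 / 2) = fun _ => (0:ℝ) := funext hE0
  rw [hzero] at key
  exact key.unique (hasDerivAt_const ξ 0)
end

section
/- Let μ > 0 and α₀ < √(μ/π). Then the function w(ξ) = α₀ e^{−ξ²/(4μ)} / (1 − (α₀/(2μ)) ∫_{−∞}^ξ e^{−η²/(4μ)} dη) is integrable on ℝ and ∫_ℝ w(ξ) dξ = −2μ log(1 − α₀ √(π/μ)). In particular, if α₀ = √(μ/π)(1 − e^{−M/(2μ)}) for some M ∈ ℝ, then ∫_ℝ w(ξ) dξ = M. -/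
/-!
With `F(ξ) = ∫_{-∞}^ξ g` for the Gaussian `g(η) = e^{−η²/(4μ)}` and `c = α₀/(2μ)`, the wave is
`w = 2μ · c F' / (1 − c F) = −2μ (log (1 − c F))'`. Since `F` increases from `0` to
`∫ g = 2μ √(π/μ)`, the denominator stays between `1` and `1 − α₀ √(π/μ) > 0`, so `w` is dominated
by a multiple of `g`, and the fundamental theorem of calculus on `ℝ` gives the mass
`−2μ (log (1 − α₀ √(π/μ)) − log 1)`.
-/

open MeasureTheory Set Filter Topology

section Primitive

variable {g : ℝ → ℝ}

theorem hasDerivAt_integral_Iio (hg : Integrable g) (hgc : Continuous g) (ξ : ℝ) :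
    HasDerivAt (fun x => ∫ η in Iio x, g η) (g ξ) ξ := by
  have hsplit : (fun x => ∫ η in Iio x, g η) = fun x => (∫ η in Iio 0, g η) + ∫ η in 0..x, g η := by
    funext x
    rw [← intervalIntegral.integral_Iio_sub_Iio' hg.integrableOn hg.integrableOn]
    ring
  rw [hsplit]
  exact (intervalIntegral.integral_hasDerivAt_right hg.intervalIntegrable
    (hgc.stronglyMeasurableAtFilter _ _) hgc.continuousAt).const_add _

theorem tendsto_integral_Iio_atTop (hg : Integrable g) :
    Tendsto (fun x => ∫ η in Iio x, g η) atTop (𝓝 (∫ η, g η)) :=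
  (aecover_Iio tendsto_id).integral_tendsto_of_countably_generated hg

theorem integral_Iio_mem_Icc (hg : Integrable g) (hg0 : 0 ≤ g) (ξ : ℝ) :
    (∫ η in Iio ξ, g η) ∈ Icc 0 (∫ η, g η) :=
  ⟨setIntegral_nonneg measurableSet_Iio fun η _ => hg0 η,
    setIntegral_le_integral hg (Eventually.of_forall hg0)⟩

end Primitive

theorem min_one_le_one_sub_mul {c I x : ℝ} (hx : x ∈ Icc 0 I) :
    min 1 (1 - c * I) ≤ 1 - c * x := by
  rcases le_total 0 c with hc | hc
  · exact (min_le_right _ _).trans (by nlinarith [hx.2])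
  · exact (min_le_left _ _).trans (by nlinarith [hx.1])

section LogPrimitive

variable {g : ℝ → ℝ} {c : ℝ}

theorem one_sub_mul_integral_Iio_pos (hg : Integrable g) (hg0 : 0 ≤ g)
    (hc : c * ∫ η, g η < 1) (ξ : ℝ) : 0 < 1 - c * ∫ η in Iio ξ, g η :=
  (lt_min one_pos (sub_pos.2 hc)).trans_le (min_one_le_one_sub_mul (integral_Iio_mem_Icc hg hg0 ξ))

theorem integrable_mul_div_one_sub_mul_integral_Iio (hg : Integrable g) (hgc : Continuous g)
    (hg0 : 0 ≤ g) (hc : c * ∫ η, g η < 1) :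
    Integrable fun ξ => c * g ξ / (1 - c * ∫ η in Iio ξ, g η) := by
  set δ := min 1 (1 - c * ∫ η, g η)
  have hδ : 0 < δ := lt_min one_pos (sub_pos.2 hc)
  have hD := one_sub_mul_integral_Iio_pos hg hg0 hc
  have hDc : Continuous fun ξ => 1 - c * ∫ η in Iio ξ, g η :=
    continuous_const.sub <| continuous_const.mul <| continuous_iff_continuousAt.2
      fun ξ => (hasDerivAt_integral_Iio hg hgc ξ).continuousAt
  have hmeas : AEStronglyMeasurable fun ξ => c * g ξ / (1 - c * ∫ η in Iio ξ, g η) :=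
    ((continuous_const.mul hgc).div hDc fun ξ => (hD ξ).ne').aestronglyMeasurable
  refine (hg.const_mul (|c| / δ)).mono hmeas (Eventually.of_forall fun ξ => ?_)
  rw [Real.norm_eq_abs, Real.norm_of_nonneg (mul_nonneg (div_nonneg (abs_nonneg c) hδ.le) (hg0 ξ)),
    abs_div, abs_mul, abs_of_nonneg (hg0 ξ), abs_of_pos (hD ξ)]
  calc |c| * g ξ / (1 - c * ∫ η in Iio ξ, g η) ≤ |c| * g ξ / δ :=
        div_le_div_of_nonneg_left (mul_nonneg (abs_nonneg c) (hg0 ξ)) hδ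
          (min_one_le_one_sub_mul (integral_Iio_mem_Icc hg hg0 ξ))
    _ = |c| / δ * g ξ := by ring

theorem integral_mul_div_one_sub_mul_integral_Iio (hg : Integrable g) (hgc : Continuous g)
    (hg0 : 0 ≤ g) (hc : c * ∫ η, g η < 1) :
    ∫ ξ, c * g ξ / (1 - c * ∫ η in Iio ξ, g η) = -Real.log (1 - c * ∫ η, g η) := by
  have hderiv (ξ : ℝ) : HasDerivAt (fun x => -Real.log (1 - c * ∫ η in Iio x, g η))
      (c * g ξ / (1 - c * ∫ η in Iio ξ, g η)) ξ := by
    have h := ((((hasDerivAt_integral_Iio hg hgc ξ).const_mul c).const_sub 1).log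
      (one_sub_mul_integral_Iio_pos hg hg0 hc ξ).ne').neg
    rwa [neg_div, neg_neg] at h
  have hbot : Tendsto (fun x => -Real.log (1 - c * ∫ η in Iio x, g η)) atBot (𝓝 0) := by
    simpa using (((tendsto_integral_Iio_zero tendsto_id).const_mul c).const_sub 1).log
      (by simp) |>.neg
  have htop := ((((tendsto_integral_Iio_atTop hg).const_mul c).const_sub 1).log
    (sub_pos.2 hc).ne').neg
  rw [integral_of_hasDerivAt_of_tendsto hderiv
    (integrable_mul_div_one_sub_mul_integral_Iio hg hgc hg0 hc) hbot htop, sub_zero]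

end LogPrimitive

theorem integrable_exp_neg_sq_div {μ : ℝ} (hμ : 0 < μ) :
    Integrable fun η : ℝ => Real.exp (-η ^ 2 / (4 * μ)) := by
  simpa [neg_div, div_eq_inv_mul] using integrable_exp_neg_mul_sq (b := (4 * μ)⁻¹) (by positivity)

theorem integral_exp_neg_sq_div {μ : ℝ} (hμ : 0 < μ) :
    ∫ η : ℝ, Real.exp (-η ^ 2 / (4 * μ)) = 2 * μ * Real.sqrt (Real.pi / μ) := by
  have h := integral_gaussian (4 * μ)⁻¹
  have hsq : Real.pi / (4 * μ)⁻¹ = (2 * μ) ^ 2 * (Real.pi / μ) := by field_simp; ring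
  simp only [neg_mul, ← div_eq_inv_mul, hsq, Real.sqrt_mul (by positivity : (0 : ℝ) ≤ (2 * μ) ^ 2),
    Real.sqrt_sq (by positivity : (0 : ℝ) ≤ 2 * μ)] at h
  simpa [neg_div] using h

theorem sqrt_div_mul_sqrt_div {a b : ℝ} (ha : 0 < a) (hb : 0 < b) :
    Real.sqrt (a / b) * Real.sqrt (b / a) = 1 := by
  rw [← Real.sqrt_mul (div_nonneg ha.le hb.le), div_mul_div_comm, mul_comm b a,
    div_self (by positivity), Real.sqrt_one]

/-- for `μ > 0` and `α₀ < √(μ/π)`, the diffusion wave is integrable with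
total mass `−2μ log(1 − α₀ √(π/μ))`; in particular, if `α₀ = √(μ/π)(1 − e^{−M/(2μ)})`
then the mass equals `M`. -/
theorem stmt2 (μ α₀ : ℝ) (hμ : 0 < μ) (hα : α₀ < Real.sqrt (μ / Real.pi)) :
    Integrable (wfun μ α₀) ∧
      (∫ ξ : ℝ, wfun μ α₀ ξ) = -2 * μ * Real.log (1 - α₀ * Real.sqrt (Real.pi / μ)) ∧
      ∀ M : ℝ, α₀ = Real.sqrt (μ / Real.pi) * (1 - Real.exp (-M / (2 * μ))) →
        (∫ ξ : ℝ, wfun μ α₀ ξ) = M := by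
  set g : ℝ → ℝ := fun η => Real.exp (-η ^ 2 / (4 * μ))
  set c := α₀ / (2 * μ)
  have hs := sqrt_div_mul_sqrt_div hμ Real.pi_pos
  have hcI : c * ∫ η, g η = α₀ * Real.sqrt (Real.pi / μ) := by
    rw [integral_exp_neg_sq_div hμ]
    simp only [c]
    field_simp
  have hc : c * ∫ η, g η < 1 := by
    rw [hcI, ← hs]
    exact mul_lt_mul_of_pos_right hα (Real.sqrt_pos.2 (by positivity))
  have hw : wfun μ α₀ = fun ξ => 2 * μ * (c * g ξ / (1 - c * ∫ η in Iio ξ, g η)) := by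
    funext ξ
    simp only [wfun, Dfun, g, c]
    field_simp
  have hg := integrable_exp_neg_sq_div hμ
  have hgc : Continuous g := by fun_prop
  have hg0 : 0 ≤ g := fun η => (Real.exp_pos _).le
  have hmass : ∫ ξ, wfun μ α₀ ξ = -2 * μ * Real.log (1 - α₀ * Real.sqrt (Real.pi / μ)) := by
    rw [hw, integral_const_mul, integral_mul_div_one_sub_mul_integral_Iio hg hgc hg0 hc, hcI]
    ring
  refine ⟨hw ▸ (integrable_mul_div_one_sub_mul_integral_Iio hg hgc hg0 hc).const_mul _,
    hmass, fun M hM => ?_⟩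
  have hε : 1 - α₀ * Real.sqrt (Real.pi / μ) = Real.exp (-M / (2 * μ)) := by
    rw [hM, mul_right_comm, hs, one_mul, sub_sub_cancel]
  rw [hmass, hε, Real.log_exp]
  field_simp
end
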